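/- An s-parallel-greedy graph with s even contains at most n^2 monotonic paths of exactly s/2 edges, where n is the number of vertices. -/

import Mathlib

open SimpleGraph


open SimpleGraph

/-- `M` witnesses that `G` is `s`-parallel-greedy. -/
def IsParallelGreedy {V : Type*} (G : SimpleGraph V) (s k : ℕ)
    (M : Fin k → SimpleGraph V) : Prop :=
  (∀ i, M i ≤ G) ∧
  (∀ e ∈ G.edgeSet, ∃ i, e ∈ (M i).edgeSet) ∧
  (Pairwise fun i j => Disjoint (M i).edgeSet (M j).edgeSet) ∧
  (∀ i, ∀ v u w : V, (M i).Adj v u → (M i).Adj v w → u = w) ∧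
  (∀ i : Fin k, ∀ u v : V, (M i).Adj u v →
    ∀ p : (⨆ j : {j : Fin k // j < i}, M j.1).Walk u v, s < p.length)

/-- A walk is monotonic (w.r.t. the matchings `M`) if its edges can be assigned
strictly increasing matching indices, each edge belonging to its assigned matching. -/
def IsMonotonic {V : Type*} {G : SimpleGraph V} {k : ℕ} (M : Fin k → SimpleGraph V)
    {u v : V} (p : G.Walk u v) : Prop :=
  ∃ l : List (Fin k), l.Chain' (· < ·) ∧
    List.Forall₂ (fun e i => e ∈ (M i).edgeSet) p.edges l

/-!
Two monotonic walks with the same endpoints and total length at most `s + 1` coincide. Let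
their last edges lie in the matchings `M i` and `M j`. If `i < j`, the two walks minus the
`j`-edge form a walk of length at most `s` joining the endpoints of that edge and using only
matchings before `j`, which greediness forbids; `j < i` is symmetric. If `i = j`, both last
edges are the `M i`-edge at the common endpoint, and we induct on what precedes them. So a
monotonic path with `s / 2` edges is determined by its ordered pair of endpoints.
-/

theorem List.Forall₂.exists_of_mem_left {α β : Type*} {R : α → β → Prop} :
    ∀ {l₁ : List α} {l₂ : List β}, List.Forall₂ R l₁ l₂ → ∀ a ∈ l₁, ∃ b ∈ l₂, R a b
  | _, _, .nil => by simp
  | _, _, .cons hab h => by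
    rintro a (_ | ⟨_, ha⟩)
    · exact ⟨_, List.mem_cons_self, hab⟩
    · obtain ⟨b, hb, hab⟩ := h.exists_of_mem_left a ha
      exact ⟨b, List.mem_cons_of_mem _ hb, hab⟩

section

variable {V : Type*} {G : SimpleGraph V} {s k : ℕ} {M : Fin k → SimpleGraph V}

def EdgesBelow (M : Fin k → SimpleGraph V) (i : Fin k) {u v : V} (p : G.Walk u v) : Prop :=
  ∀ e ∈ p.edges, ∃ c < i, e ∈ (M c).edgeSet

lemma edgesBelow_nil (i : Fin k) {u : V} : EdgesBelow M i (Walk.nil : G.Walk u u) := by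
  simp [EdgesBelow]

lemma EdgesBelow.concat {i j : Fin k} {u x v : V} {p : G.Walk u x} (hp : EdgesBelow M i p)
    (h : G.Adj x v) (hi : (M i).Adj x v) (hij : i < j) : EdgesBelow M j (p.concat h) := by
  intro e he
  rw [Walk.edges_concat, List.concat_eq_append, List.mem_append, List.mem_singleton] at he
  rcases he with he | rfl
  · obtain ⟨c, hc, hec⟩ := hp e he
    exact ⟨c, hc.trans hij, hec⟩
  · exact ⟨i, hij, hi⟩

lemma IsMonotonic.of_concat {u x v : V} {p : G.Walk u x} {h : G.Adj x v}
    (hm : IsMonotonic M (p.concat h)) :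
    ∃ i, (M i).Adj x v ∧ IsMonotonic M p ∧ EdgesBelow M i p := by
  obtain ⟨l, hchain, hl⟩ := hm
  rw [Walk.edges_concat, ← List.forall₂_reverse_iff, List.concat_eq_append, List.reverse_concat,
    List.forall₂_cons_left_iff] at hl
  obtain ⟨i, l', hi, hl', hrev⟩ := hl
  rw [List.reverse_eq_cons_iff] at hrev
  subst hrev
  rw [List.Chain', List.isChain_iff_pairwise, List.pairwise_append] at hchain
  obtain ⟨hchain, -, hlt⟩ := hchain
  have hp : List.Forall₂ (fun e c => e ∈ (M c).edgeSet) p.edges l'.reverse := by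
    simpa using List.forall₂_reverse_iff.mpr hl'
  refine ⟨i, hi, ⟨l'.reverse, List.isChain_iff_pairwise.mpr hchain, hp⟩, fun e he => ?_⟩
  obtain ⟨c, hc, hec⟩ := hp.exists_of_mem_left e he
  exact ⟨c, hlt c hc i (List.mem_singleton_self i), hec⟩

namespace IsParallelGreedy

lemma lt_length_of_edgesBelow (hPG : IsParallelGreedy G s k M) {i : Fin k} {x y : V}
    (hadj : (M i).Adj x y) {p : G.Walk x y} (hp : EdgesBelow M i p) : s < p.length := by
  have hsub : ∀ e ∈ p.edges, e ∈ (⨆ j : {j : Fin k // j < i}, M j.1).edgeSet := by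
    intro e he
    obtain ⟨c, hci, hec⟩ := hp e he
    exact edgeSet_mono (le_iSup (fun j : {j : Fin k // j < i} => M j.1) ⟨c, hci⟩) hec
  simpa using hPG.2.2.2.2 i x y hadj (p.transfer _ hsub)

lemma lt_length_add (hPG : IsParallelGreedy G s k M) {i : Fin k} {u v y : V}
    (hadj : (M i).Adj y v) {p : G.Walk u v} {q : G.Walk u y}
    (hp : EdgesBelow M i p) (hq : EdgesBelow M i q) : s < p.length + q.length := by
  have := hPG.lt_length_of_edgesBelow hadj (p := q.reverse.append p) fun e he => by
    rw [Walk.edges_append, List.mem_append, Walk.edges_reverse, List.mem_reverse] at he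
    exact he.elim (hq e) (hp e)
  simpa [add_comm] using this

theorem eq_of_isMonotonic (hPG : IsParallelGreedy G s k M) {u v : V} {p q : G.Walk u v}
    (hp : IsMonotonic M p) (hq : IsMonotonic M q) (hlen : p.length + q.length ≤ s + 1) :
    p = q := by
  induction p using Walk.concatRec with
  | Hnil =>
    cases q using Walk.concatRec with
    | Hnil => rfl
    | Hconcat q h =>
      obtain ⟨j, hj, -, hqj⟩ := hq.of_concat
      have := hPG.lt_length_add hj (edgesBelow_nil j) hqj
      simp only [Walk.length_nil, Walk.length_concat] at hlen this
      omega
  | Hconcat p h ih =>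
    obtain ⟨i, hi, hp, hpi⟩ := hp.of_concat
    cases q using Walk.concatRec with
    | Hnil =>
      have := hPG.lt_length_add hi (edgesBelow_nil i) hpi
      simp only [Walk.length_nil, Walk.length_concat] at hlen this
      omega
    | Hconcat q h' =>
      obtain ⟨j, hj, hq, hqj⟩ := hq.of_concat
      simp only [Walk.length_concat] at hlen
      rcases lt_trichotomy i j with hij | rfl | hij
      · have := hPG.lt_length_add hj (hpi.concat h hi hij) hqj
        simp only [Walk.length_concat] at this
        omega
      · obtain rfl := hPG.2.2.2.1 i _ _ _ hi.symm hj.symm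
        rw [ih hp hq (by omega)]
      · have := hPG.lt_length_add hi (hqj.concat h' hj hij) hpi
        simp only [Walk.length_concat] at this
        omega

end IsParallelGreedy

end

theorem monotonic_path_count_le_sq_general
    {V : Type*} [Fintype V] (G : SimpleGraph V) (s k : ℕ)
    (M : Fin k → SimpleGraph V) (hPG : IsParallelGreedy G s k M) :
    {x : (u : V) × (v : V) × G.Walk u v |
        x.2.2.IsPath ∧ x.2.2.length = s / 2 ∧ IsMonotonic M x.2.2}.Finite ∧
    {x : (u : V) × (v : V) × G.Walk u v |
        x.2.2.IsPath ∧ x.2.2.length = s / 2 ∧ IsMonotonic M x.2.2}.ncard ≤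
      Fintype.card V ^ 2 := by
  set S := {x : (u : V) × (v : V) × G.Walk u v |
    x.2.2.IsPath ∧ x.2.2.length = s / 2 ∧ IsMonotonic M x.2.2}
  have hinj : Set.InjOn (fun x => (x.1, x.2.1)) S := by
    rintro ⟨u, v, p⟩ ⟨-, hp, hpm⟩ ⟨u', v', q⟩ ⟨-, hq, hqm⟩ huv
    obtain ⟨rfl, rfl⟩ := Prod.mk.inj huv
    dsimp only at hp hpm hq hqm ⊢
    rw [hPG.eq_of_isMonotonic hpm hqm (by omega)]
  refine ⟨.of_injOn (Set.mapsTo_univ _ _) hinj Set.finite_univ, ?_⟩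
  calc S.ncard ≤ (Set.univ : Set (V × V)).ncard :=
        Set.ncard_le_ncard_of_injOn _ (fun _ _ => Set.mem_univ _) hinj
    _ = Fintype.card V ^ 2 := by
      rw [Set.ncard_univ, Nat.card_eq_fintype_card, Fintype.card_prod, sq]

/-- An `s`-parallel-greedy graph on `n` vertices (with `s` even) contains at most `n^2`
monotonic paths with exactly `s/2` edges: the set of such paths (recorded together with
their ordered endpoints) is finite of cardinality at most `n^2`. -/
theorem monotonic_path_count_le_sq
    {V : Type*} [Fintype V] (G : SimpleGraph V) (s k : ℕ) (hs : 2 ≤ s) (hse : Even s)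
    (M : Fin k → SimpleGraph V) (hPG : IsParallelGreedy G s k M) :
    {x : (u : V) × (v : V) × G.Walk u v |
        x.2.2.IsPath ∧ x.2.2.length = s / 2 ∧ IsMonotonic M x.2.2}.Finite ∧
    {x : (u : V) × (v : V) × G.Walk u v |
        x.2.2.IsPath ∧ x.2.2.length = s / 2 ∧ IsMonotonic M x.2.2}.ncard ≤
      Fintype.card V ^ 2 :=
  monotonic_path_count_le_sq_general G s k M hPG
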